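/- Let Γ : ℝ₊₊ ⇉ ℝ be a nonempty-valued set-valued map, let h : ℝ₊₊ → ℝ be locally Lipschitz with y ≤ h(k) for every k ∈ ℝ₊₊ and y ∈ Γ(k), and fix k̄ > 0. Let k₁ : [0,T] → ℝ₊₊ be a solution of k̇(t) = h(k(t)), k(0) = k̄, and let k₂ : [0,T] → ℝ₊₊ be a solution of the differential inclusion k̇(t) ∈ Γ(k(t)), k(0) = k̄. Then k₁(t) ≥ k₂(t) for all t ∈ [0,T]. -/

import Mathlib

open MeasureTheory Real Set Filter Topology
open scoped ENNReal NNReal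

noncomputable section

/- ## Basic analytic notions -/

/-- The positive part of an extended real number, as an element of `ℝ≥0∞`. -/
def eposPart (x : EReal) : ℝ≥0∞ := if x = ⊤ then ⊤ else ENNReal.ofReal x.toReal

/-- `f` is absolutely continuous on `[a, b]`. -/
def AbsContOn (f : ℝ → ℝ) (a b : ℝ) : Prop :=
  ∀ ε > (0:ℝ), ∃ δ > (0:ℝ), ∀ n : ℕ, ∀ s t : Fin n → ℝ,
    (∀ i, a ≤ s i ∧ s i ≤ t i ∧ t i ≤ b) →
    (Pairwise fun i j => Disjoint (Set.Ioo (s i) (t i)) (Set.Ioo (s j) (t j))) →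
    (∑ i, (t i - s i)) < δ → (∑ i, |f (t i) - f (s i)|) < ε

/-- `f` is absolutely continuous on every compact subinterval of `ℝ₊`. -/
def LocAbsCont (f : ℝ → ℝ) : Prop := ∀ a b : ℝ, 0 ≤ a → a < b → AbsContOn f a b

/-- The set `W₁` of nonnegative locally integrable control paths. -/
def W1 : Set (ℝ → ℝ) := {c | (∀ t, 0 ≤ c t) ∧ ∀ T > (0:ℝ), IntegrableOn c (Set.Icc 0 T)}

/-- The set `W₂` of nonnegative measurable locally bounded control paths. -/
def W2 : Set (ℝ → ℝ) :=
  {c | (∀ t, 0 ≤ c t) ∧ Measurable c ∧ ∀ T > (0:ℝ), ∃ M : ℝ, ∀ t ∈ Set.Icc (0:ℝ) T, c t ≤ M}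

/-- Assumption 1: positive discount rate, and `W` is `W₁` or `W₂`. -/
def Assumption1 (ρ : ℝ) (W : Set (ℝ → ℝ)) : Prop := 0 < ρ ∧ (W = W1 ∨ W = W2)

def posOrth : Set (ℝ × ℝ) := {p | 0 ≤ p.1 ∧ 0 ≤ p.2}
def posOrthOpen : Set (ℝ × ℝ) := {p | 0 < p.1 ∧ 0 < p.2}

/-- The realized (real-valued) utility. -/
def ur (u : ℝ → ℝ → EReal) (c k : ℝ) : ℝ := (u c k).toReal
/-- The partial derivative `∂u/∂c`. -/
def ucDeriv (u : ℝ → ℝ → EReal) (c k : ℝ) : ℝ := deriv (fun c' => ur u c' k) c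
/-- The partial derivative `∂u/∂k`. -/
def ukDeriv (u : ℝ → ℝ → EReal) (c k : ℝ) : ℝ := deriv (fun k' => ur u c k') k

/-- Assumption 2 on the instantaneous utility function `u : ℝ₊² → ℝ ∪ {-∞}`. -/
structure Assumption2 (u : ℝ → ℝ → EReal) : Prop where
  ne_top : ∀ c k : ℝ, u c k ≠ ⊤
  cont : ContinuousOn (fun p : ℝ × ℝ => u p.1 p.2) posOrth
  concave : ∀ c₁ k₁ c₂ k₂ t : ℝ, 0 ≤ c₁ → 0 ≤ k₁ → 0 ≤ c₂ → 0 ≤ k₂ → 0 ≤ t → t ≤ 1 →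
    ((1 - t : ℝ) : EReal) * u c₁ k₁ + (t : EReal) * u c₂ k₂ ≤
      u ((1 - t) * c₁ + t * c₂) ((1 - t) * k₁ + t * k₂)
  mono : ∀ c₁ k₁ c₂ k₂ : ℝ, 0 ≤ c₁ → 0 ≤ k₁ → c₁ ≤ c₂ → k₁ ≤ k₂ → u c₁ k₁ ≤ u c₂ k₂
  strictMono_c : ∀ k c₁ c₂ : ℝ, 0 < k → 0 < c₁ → c₁ < c₂ → u c₁ k < u c₂ k
  ne_bot_pos : ∀ c k : ℝ, 0 < c → 0 < k → u c k ≠ ⊥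
  smooth : ContDiffOn ℝ 1 (fun p : ℝ × ℝ => ur u p.1 p.2) posOrthOpen
  ne_bot_zero : ∃ c > (0:ℝ), u c 0 ≠ ⊥

/-- Assumption 3 on the technology function `F : ℝ₊² → ℝ` (with `F k c`). -/
structure Assumption3 (W : Set (ℝ → ℝ)) (F : ℝ → ℝ → ℝ) : Prop where
  cont : ContinuousOn (fun p : ℝ × ℝ => F p.1 p.2) posOrth
  concave : ConcaveOn ℝ posOrth (fun p : ℝ × ℝ => F p.1 p.2)
  zero : F 0 0 = 0
  anti_c : ∀ k c₁ c₂ : ℝ, 0 ≤ k → 0 ≤ c₁ → c₁ < c₂ → F k c₂ < F k c₁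
  lower : ∃ d₁ > (0:ℝ), ∃ δ₂ : ℝ → ℝ, (∀ c : ℝ, 0 ≤ c → 0 ≤ δ₂ c) ∧ δ₂ 0 = 0 ∧
    (∀ c₁ c₂ : ℝ, 0 ≤ c₁ → c₁ < c₂ → δ₂ c₁ < δ₂ c₂) ∧
    (∀ k c : ℝ, 0 < k → 0 ≤ c → -d₁ * k - δ₂ c < F k c) ∧
    (W = W1 → ∃ d₂ : ℝ, 0 ≤ d₂ ∧ ∀ c : ℝ, 0 ≤ c → δ₂ c = d₂ * c)
  productive : ∀ c : ℝ, 0 ≤ c → ∃ k > (0:ℝ), F 0 c < F k c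

/-- Assumption 4 on the marginal utility of consumption. -/
structure Assumption4 (u : ℝ → ℝ → EReal) : Prop where
  anti : ∀ k c₁ c₂ : ℝ, 0 < k → 0 < c₁ → c₁ < c₂ → ucDeriv u c₂ k < ucDeriv u c₁ k
  tendsto_zero : ∀ k > (0:ℝ), Tendsto (fun c => ucDeriv u c k) (𝓝[>] (0:ℝ)) atTop
  tendsto_top : ∀ k > (0:ℝ), Tendsto (fun c => ucDeriv u c k) atTop (𝓝 0)
  k_bounded : ∀ k > (0:ℝ), ∃ M : ℝ, ∀ᶠ c in 𝓝[>] (0:ℝ), ukDeriv u c k ≤ M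

/-- The CRRA (constant relative risk aversion) function. -/
def crra (θ x : ℝ) : ℝ := if θ = 1 then Real.log x else (x ^ (1 - θ) - 1) / (1 - θ)

/-- The CRRA function extended to `x = 0` with value `-∞` when `θ ≥ 1`. -/
def crraE (θ x : ℝ) : EReal :=
  if 0 < x then ((crra θ x : ℝ) : EReal)
  else if θ < 1 then ((-1 / (1 - θ) : ℝ) : EReal) else ⊥

/-- Assumption 5 with explicit parameters. -/
structure Assumption5Data (ρ : ℝ) (u : ℝ → ℝ → EReal) (F : ℝ → ℝ → ℝ)
    (kstar cstar γ δ θ a b C : ℝ) : Prop where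
  kstar_pos : 0 < kstar
  cstar_nonneg : 0 ≤ cstar
  gamma_pos : 0 < γ
  delta_pos : 0 < δ
  theta_pos : 0 < θ
  a_pos : 0 < a
  b_nonneg : 0 ≤ b
  subdiff : ∀ k c : ℝ, 0 ≤ k → 0 ≤ c →
    F k c - F kstar cstar ≤ γ * (k - kstar) - δ * (c - cstar)
  rate : 0 < ρ - (1 - θ) * γ
  bound : ∀ c k : ℝ, 0 < c → 0 < k →
    u c k ≤ ((a * crra θ c + b * crra θ k + C : ℝ) : EReal)

/-- Assumption 5. -/
def Assumption5 (ρ : ℝ) (u : ℝ → ℝ → EReal) (F : ℝ → ℝ → ℝ) : Prop :=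
  ∃ kstar cstar γ δ θ a b C : ℝ, Assumption5Data ρ u F kstar cstar γ δ θ a b C

/-- The partial derivative `∂F/∂c`. -/
def FcDeriv (F : ℝ → ℝ → ℝ) (k c : ℝ) : ℝ := deriv (fun c' => F k c') c
/-- The mixed partial derivative `∂²F/∂k∂c`. -/
def FckDeriv (F : ℝ → ℝ → ℝ) (k c : ℝ) : ℝ := deriv (fun k' => FcDeriv F k' c) k
/-- The right partial derivative `D_{k,+}F(k,c)` of the concave function `k ↦ F(k,c)`. -/
def rightDerivK (F : ℝ → ℝ → ℝ) (k c : ℝ) : ℝ :=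
  sSup {r : ℝ | ∃ t > (0:ℝ), r = (F (k + t) c - F k c) / t}

/-- Assumption 6. -/
structure Assumption6 (ρ : ℝ) (u : ℝ → ℝ → EReal) (F : ℝ → ℝ → ℝ) : Prop where
  smooth : ∃ ε₀ > (0:ℝ),
    (∀ c > (0:ℝ), ContDiffOn ℝ 1 (fun k => ucDeriv u c k) (Set.Ioo 0 ε₀)) ∧
    ∃ H : ℝ → ℝ → ℝ,
      ContDiffOn ℝ 1 (fun p : ℝ × ℝ => H p.1 p.2) (Set.Ioo 0 ε₀ ×ˢ Set.Ioi 0) ∧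
      (∀ k c : ℝ, k ∈ Set.Ioo 0 ε₀ → 0 < c → 0 < deriv (fun k' => H k' c) k) ∧
      (∀ k c : ℝ, k ∈ Set.Ioo 0 ε₀ → 0 < c → deriv (fun c' => H k c') c < 0) ∧
      (∀ k c : ℝ, k ∈ Set.Ioo 0 ε₀ → 0 < c → H k c ≠ 0 →
        ∃ ε > (0:ℝ),
          (∀ p ∈ Metric.ball ((k, c) : ℝ × ℝ) ε,
            HasDerivAt (fun c' => F p.1 c') (FcDeriv F p.1 p.2) p.2) ∧
          ContinuousOn (fun p : ℝ × ℝ => FcDeriv F p.1 p.2) (Metric.ball ((k, c) : ℝ × ℝ) ε) ∧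
          (∀ p ∈ Metric.ball ((k, c) : ℝ × ℝ) ε,
            HasDerivAt (fun k' => FcDeriv F k' p.2) (FckDeriv F p.1 p.2) p.1) ∧
          ContinuousOn (fun p : ℝ × ℝ => FckDeriv F p.1 p.2) (Metric.ball ((k, c) : ℝ × ℝ) ε))
  steep : ∃ k > (0:ℝ), ∃ r : ℝ, ρ < r ∧ ∀ c : ℝ, 0 ≤ c → r ≤ rightDerivK F k c

/- ## Payoffs and the value function -/

/-- The discounted utility flow `e^{-ρt} u(c(t), k(t))`, as an extended real. -/
def discounted (ρ : ℝ) (u : ℝ → ℝ → EReal) (k c : ℝ → ℝ) (t : ℝ) : EReal :=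
  ((Real.exp (-ρ * t) : ℝ) : EReal) * u (c t) (k t)

def payoffPos (ρ : ℝ) (u : ℝ → ℝ → EReal) (k c : ℝ → ℝ) : ℝ≥0∞ :=
  ∫⁻ t in Set.Ioi (0:ℝ), eposPart (discounted ρ u k c t)

def payoffNeg (ρ : ℝ) (u : ℝ → ℝ → EReal) (k c : ℝ → ℝ) : ℝ≥0∞ :=
  ∫⁻ t in Set.Ioi (0:ℝ), eposPart (-(discounted ρ u k c t))

/-- `∫₀^∞ e^{-ρt} u(c(t),k(t)) dt` can be defined (possibly `±∞`). -/
def PayoffDefined (ρ : ℝ) (u : ℝ → ℝ → EReal) (k c : ℝ → ℝ) : Prop :=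
  payoffPos ρ u k c ≠ ⊤ ∨ payoffNeg ρ u k c ≠ ⊤

/-- `∫₀^∞ e^{-ρt} u(c(t),k(t)) dt`, as an extended real. -/
def payoff (ρ : ℝ) (u : ℝ → ℝ → EReal) (k c : ℝ → ℝ) : EReal :=
  (payoffPos ρ u k c : EReal) - (payoffNeg ρ u k c : EReal)

/-- `∫₀^T e^{-ρt} u(c(t),k(t)) dt`, as an extended real. -/
def payoffUpTo (ρ : ℝ) (u : ℝ → ℝ → EReal) (k c : ℝ → ℝ) (T : ℝ) : EReal :=
  ((∫⁻ t in Set.Ioc (0:ℝ) T, eposPart (discounted ρ u k c t) : ℝ≥0∞) : EReal) -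
  ((∫⁻ t in Set.Ioc (0:ℝ) T, eposPart (-(discounted ρ u k c t)) : ℝ≥0∞) : EReal)

/-- The admissible pairs of problem (1) with initial capital `kbar`. -/
structure Admissible (ρ : ℝ) (W : Set (ℝ → ℝ)) (u : ℝ → ℝ → EReal) (F : ℝ → ℝ → ℝ)
    (kbar : ℝ) (k c : ℝ → ℝ) : Prop where
  locAC : LocAbsCont k
  mem_W : c ∈ W
  k_nonneg : ∀ t : ℝ, 0 ≤ t → 0 ≤ k t
  c_nonneg : ∀ t : ℝ, 0 ≤ t → 0 ≤ c t
  defined : PayoffDefined ρ u k c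
  init : k 0 = kbar
  ode : ∀ᵐ t : ℝ, 0 < t → HasDerivAt k (F (k t) (c t)) t

/-- The value function of problem (1). -/
def Vbar (ρ : ℝ) (W : Set (ℝ → ℝ)) (u : ℝ → ℝ → EReal) (F : ℝ → ℝ → ℝ) (kbar : ℝ) : EReal :=
  sSup {x : EReal | ∃ k c : ℝ → ℝ, Admissible ρ W u F kbar k c ∧ x = payoff ρ u k c}

/-- The value function, realized as a real-valued function. -/
def VbarR (ρ : ℝ) (W : Set (ℝ → ℝ)) (u : ℝ → ℝ → EReal) (F : ℝ → ℝ → ℝ) (kbar : ℝ) : ℝ :=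
  (Vbar ρ W u F kbar).toReal

/-- The value function is finite. -/
def VbarFinite (ρ : ℝ) (W : Set (ℝ → ℝ)) (u : ℝ → ℝ → EReal) (F : ℝ → ℝ → ℝ) : Prop :=
  ∀ k : ℝ, 0 < k → Vbar ρ W u F k ≠ ⊤ ∧ Vbar ρ W u F k ≠ ⊥

/- ## The HJB equation -/

/-- The Hamiltonian `sup_{c ≥ 0} {F(k,c)p + u(c,k)}`. -/
def Ham (u : ℝ → ℝ → EReal) (F : ℝ → ℝ → ℝ) (k p : ℝ) : EReal :=
  ⨆ c : {c : ℝ // 0 ≤ c}, (((F k c.1 * p : ℝ) : EReal) + u c.1 k)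

def IsViscositySubsolution (ρ : ℝ) (u : ℝ → ℝ → EReal) (F : ℝ → ℝ → ℝ) (V : ℝ → ℝ) : Prop :=
  UpperSemicontinuousOn V (Set.Ioi 0) ∧
  ∀ k : ℝ, 0 < k → ∀ φ : ℝ → ℝ, ∀ δ > (0:ℝ), Metric.ball k δ ⊆ Set.Ioi 0 →
    ContDiffOn ℝ 1 φ (Metric.ball k δ) → φ k = V k →
    (∀ x ∈ Metric.ball k δ, φ x ≤ V x) →
    Ham u F k (deriv φ k) ≤ ((ρ * V k : ℝ) : EReal)

def IsViscositySupersolution (ρ : ℝ) (u : ℝ → ℝ → EReal) (F : ℝ → ℝ → ℝ) (V : ℝ → ℝ) : Prop :=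
  LowerSemicontinuousOn V (Set.Ioi 0) ∧
  ∀ k : ℝ, 0 < k → ∀ φ : ℝ → ℝ, ∀ δ > (0:ℝ), Metric.ball k δ ⊆ Set.Ioi 0 →
    ContDiffOn ℝ 1 φ (Metric.ball k δ) → φ k = V k →
    (∀ x ∈ Metric.ball k δ, V x ≤ φ x) →
    ((ρ * V k : ℝ) : EReal) ≤ Ham u F k (deriv φ k)

def IsViscositySolution (ρ : ℝ) (u : ℝ → ℝ → EReal) (F : ℝ → ℝ → ℝ) (V : ℝ → ℝ) : Prop :=
  ContinuousOn V (Set.Ioi 0) ∧ IsViscositySubsolution ρ u F V ∧ IsViscositySupersolution ρ u F V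

/-- `V` is a classical (continuously differentiable) solution to the HJB equation on `ℝ₊₊`. -/
def IsClassicalSolution (ρ : ℝ) (u : ℝ → ℝ → EReal) (F : ℝ → ℝ → ℝ) (V : ℝ → ℝ) : Prop :=
  (∀ k : ℝ, 0 < k → DifferentiableAt ℝ V k) ∧ ContinuousOn (deriv V) (Set.Ioi 0) ∧
  ∀ k : ℝ, 0 < k → Ham u F k (deriv V k) = ((ρ * V k : ℝ) : EReal)

/- ## Subdifferentials -/

/-- The subdifferential (superdifferential) of a concave function `G` on the set `S`. -/
def subdiffOn (G : ℝ → ℝ) (S : Set ℝ) (x : ℝ) : Set ℝ :=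
  {p : ℝ | ∀ y ∈ S, G y - G x ≤ p * (y - x)}

/- ## ODEs and differential inclusions -/

/-- A positive solution of the autonomous ODE `k' = h(k)`, `k(0) = kbar`, on the interval `I`. -/
structure SolvesODEOn (h : ℝ → ℝ) (kbar : ℝ) (k : ℝ → ℝ) (I : Set ℝ) : Prop where
  locAC : ∀ a b : ℝ, a ∈ I → b ∈ I → a < b → AbsContOn k a b
  init : k 0 = kbar
  pos : ∀ t ∈ I, 0 < k t
  hasDeriv : ∀ᵐ t : ℝ, t ∈ I → HasDerivAt k (h (k t)) t

/-- A positive solution of the differential inclusion `k' ∈ Γ(k)`, `k(0) = kbar`, on `I`. -/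
structure SolvesInclOn (Γ : ℝ → Set ℝ) (kbar : ℝ) (k : ℝ → ℝ) (I : Set ℝ) : Prop where
  locAC : ∀ a b : ℝ, a ∈ I → b ∈ I → a < b → AbsContOn k a b
  init : k 0 = kbar
  pos : ∀ t ∈ I, 0 < k t
  hasDeriv : ∀ᵐ t : ℝ, t ∈ I → ∃ d ∈ Γ (k t), HasDerivAt k d t

/-- The pure accumulation path with initial value `kbar`. -/
def IsPurePath (F : ℝ → ℝ → ℝ) (kbar : ℝ) (k : ℝ → ℝ) : Prop :=
  SolvesODEOn (fun x => F x 0) kbar k (Set.Ici 0)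

/-- The growth condition (7). -/
def GrowthCondition (ρ : ℝ) (F : ℝ → ℝ → ℝ) (V : ℝ → ℝ) : Prop :=
  ∀ kbar : ℝ, 0 < kbar → ∀ kp : ℝ → ℝ, IsPurePath F kbar kp →
    Tendsto (fun T => Real.exp (-ρ * T) * V (kp T)) atTop (𝓝 0)

/-- Membership in the space `𝒱` of increasing concave functions satisfying the growth
condition. -/
def memV (ρ : ℝ) (F : ℝ → ℝ → ℝ) (V : ℝ → ℝ) : Prop :=
  StrictMonoOn V (Set.Ioi 0) ∧ ConcaveOn ℝ (Set.Ioi 0) V ∧ GrowthCondition ρ F V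

/- ## The maximizing consumption selection and the optimal differential inclusion -/

/-- `cs` is the positive continuous maximizer function `c*(p,k)` of Proposition 1. -/
def IsMaxSelection (u : ℝ → ℝ → EReal) (F : ℝ → ℝ → ℝ) (cs : ℝ → ℝ → ℝ) : Prop :=
  (∀ p k : ℝ, 0 < p → 0 < k → 0 < cs p k) ∧
  ContinuousOn (fun q : ℝ × ℝ => cs q.1 q.2) posOrthOpen ∧
  ∀ p k : ℝ, 0 < p → 0 < k →
    ((F k (cs p k) * p : ℝ) : EReal) + u (cs p k) k = Ham u F k p

/-- The set `F(k, c*(∂V(k), k))`. -/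
def inclSet (F : ℝ → ℝ → ℝ) (cs : ℝ → ℝ → ℝ) (V : ℝ → ℝ) (k : ℝ) : Set ℝ :=
  {d : ℝ | ∃ p ∈ subdiffOn V (Set.Ioi 0) k, d = F k (cs p k)}

/-- `limsup_{n → ∞} n (k(t + 1/n) - k(t))`. -/
def forwardSlope (k : ℝ → ℝ) (t : ℝ) : ℝ :=
  Filter.limsup (fun n : ℕ => (n : ℝ) * (k (t + 1 / (n : ℝ)) - k t)) Filter.atTop

/-- The consumption path (13): `c(t)` is the element of `c*(∂V(k(t)), k(t))` closest to
`limsup_{n} n (k(t+1/n) - k(t))`. -/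
def IsClosestConsumption (F : ℝ → ℝ → ℝ) (cs : ℝ → ℝ → ℝ) (V : ℝ → ℝ)
    (k : ℝ → ℝ) (c : ℝ → ℝ) : Prop :=
  ∀ t : ℝ, 0 ≤ t →
    (∃ p ∈ subdiffOn V (Set.Ioi 0) (k t), c t = cs p (k t)) ∧
    ∀ p ∈ subdiffOn V (Set.Ioi 0) (k t),
      |forwardSlope k t - c t| ≤ |forwardSlope k t - cs p (k t)|

/-- Membership in the class `B_k̄`. -/
structure MemB (ρ : ℝ) (W : Set (ℝ → ℝ)) (u : ℝ → ℝ → EReal) (F : ℝ → ℝ → ℝ)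
    (kbar : ℝ) (k c : ℝ → ℝ) : Prop where
  locAC : LocAbsCont k
  mem_W : c ∈ W
  k_nonneg : ∀ t : ℝ, 0 ≤ t → 0 ≤ k t
  c_nonneg : ∀ t : ℝ, 0 ≤ t → 0 ≤ c t
  lim_exists : ∃ L : ℝ, Tendsto (fun T => payoffUpTo ρ u k c T) atTop (𝓝 ((L : ℝ) : EReal))
  init : k 0 = kbar
  ode : ∀ᵐ t : ℝ, 0 < t → HasDerivAt k (F (k t) (c t)) t

/- ## Quantities appearing in Lemma 4 -/

def khat (F : ℝ → ℝ → ℝ) (kstar cstar γ δ kbar : ℝ) : ℝ :=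
  kbar - kstar + (δ * cstar + F kstar cstar) / γ

def CstarConst (ρ θ γ δ kh : ℝ) : ℝ := (ρ - (1 - θ) * γ) / (θ * δ) * kh

def V3val (ρ θ γ Cs : ℝ) : ℝ :=
  if θ = 1 then Real.log Cs / ρ + (γ - ρ) / ρ ^ 2
  else Cs ^ (1 - θ) * θ / ((1 - θ) * (ρ - (1 - θ) * γ)) - 1 / (ρ * (1 - θ))

def V4val (ρ θ γ kh : ℝ) : ℝ :=
  if θ = 1 then Real.log kh / ρ + γ / ρ ^ 2
  else kh ^ (1 - θ) / ((1 - θ) * (ρ - (1 - θ) * γ)) - 1 / (ρ * (1 - θ))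

/- ## Carathéodory equations (Lemma 3) -/

/-- Carathéodory's condition for `h(t,x)` relative to the region `U`. -/
def Caratheodory (h : ℝ → ℝ → ℝ) (U : Set (ℝ × ℝ)) : Prop :=
  (∀ t : ℝ, ContinuousOn (fun x => h t x) {x : ℝ | (t, x) ∈ U}) ∧
  (∀ x : ℝ, Measurable (fun t => h t x))

/-- `h(t,x)` is Lipschitz in `x` on `U`. -/
def LipschitzInSnd (h : ℝ → ℝ → ℝ) (U : Set (ℝ × ℝ)) : Prop :=
  ∃ L > (0:ℝ), ∀ t x₁ x₂ : ℝ, (t, x₁) ∈ U → (t, x₂) ∈ U → |h t x₁ - h t x₂| ≤ L * |x₁ - x₂|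

/-- A solution on `[0,T]` of `k' = h(t,k)`, `k(0) = kbar`, with graph in `U`. -/
structure CaraSolOn (h : ℝ → ℝ → ℝ) (U : Set (ℝ × ℝ)) (kbar T : ℝ) (k : ℝ → ℝ) : Prop where
  ac : AbsContOn k 0 T
  init : k 0 = kbar
  graph : ∀ t ∈ Set.Icc (0:ℝ) T, (t, k t) ∈ U
  hasDeriv : ∀ᵐ t : ℝ, t ∈ Set.Icc (0:ℝ) T → HasDerivAt k (h t (k t)) t

/- ## The Ramsey–Cass–Koopmans specialization -/

def ur0 (u0 : ℝ → EReal) (c : ℝ) : ℝ := (u0 c).toReal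

/-- Assumption 2' on a one-variable utility function. -/
structure Assumption2' (u0 : ℝ → EReal) : Prop where
  ne_top : ∀ c : ℝ, u0 c ≠ ⊤
  cont : ContinuousOn u0 (Set.Ici 0)
  concave : ∀ c₁ c₂ t : ℝ, 0 ≤ c₁ → 0 ≤ c₂ → 0 ≤ t → t ≤ 1 →
    ((1 - t : ℝ) : EReal) * u0 c₁ + (t : EReal) * u0 c₂ ≤ u0 ((1 - t) * c₁ + t * c₂)
  strictMono : ∀ c₁ c₂ : ℝ, 0 ≤ c₁ → c₁ < c₂ → u0 c₁ < u0 c₂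
  ne_bot_pos : ∀ c : ℝ, 0 < c → u0 c ≠ ⊥
  smooth : ContDiffOn ℝ 1 (ur0 u0) (Set.Ioi 0)
  anti : ∀ c₁ c₂ : ℝ, 0 < c₁ → c₁ < c₂ → deriv (ur0 u0) c₂ < deriv (ur0 u0) c₁
  tendsto_zero : Tendsto (fun c => deriv (ur0 u0) c) (𝓝[>] (0:ℝ)) atTop
  tendsto_top : Tendsto (fun c => deriv (ur0 u0) c) atTop (𝓝 0)

/-- Assumption 3' on a production function `f` and the depreciation rate `d`. -/
structure Assumption3' (f : ℝ → ℝ) (d : ℝ) : Prop where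
  nonneg : ∀ k : ℝ, 0 ≤ k → 0 ≤ f k
  cont : ContinuousOn f (Set.Ici 0)
  concave : ConcaveOn ℝ (Set.Ici 0) f
  strictMono : StrictMonoOn f (Set.Ici 0)
  zero : f 0 = 0
  d_nonneg : 0 ≤ d
  productive : ∃ k > (0:ℝ), d * k < f k

/-- The Inada condition. -/
def InadaCondition (f : ℝ → ℝ) : Prop :=
  (∀ k : ℝ, 0 < k → DifferentiableAt ℝ f k) ∧ ContinuousOn (deriv f) (Set.Ioi 0) ∧
  StrictConcaveOn ℝ (Set.Ici 0) f ∧ deriv f '' Set.Ioi 0 = Set.Ioi 0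

/-- The utility function of the RCK model, as a function of `(c, k)`. -/
def rckU (u0 : ℝ → EReal) : ℝ → ℝ → EReal := fun c _ => u0 c

/-- The technology function of the RCK model. -/
def rckF (f : ℝ → ℝ) (d : ℝ) : ℝ → ℝ → ℝ := fun k c => f k - d * k - c

/-! The gap `g = k₂ - k₁` vanishes at `0`. Both paths stay in a compact subset of `ℝ₊₊`, on
which `h` is `K`-Lipschitz, so almost everywhere on `{g > 0}` we get
`g' ≤ h(k₂) - h(k₁) ≤ K g`. A Grönwall argument for absolutely continuous functions, resting on
the fundamental theorem of calculus for such functions, then forces `g ≤ 0`. -/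

theorem AbsContOn.absolutelyContinuousOnInterval {f : ℝ → ℝ} {a b : ℝ} (hf : AbsContOn f a b)
    (hab : a ≤ b) : AbsolutelyContinuousOnInterval f a b := by
  rw [absolutelyContinuousOnInterval_iff]
  intro ε hε
  obtain ⟨δ, hδ, H⟩ := hf ε hε
  refine ⟨δ, hδ, fun ⟨n, I⟩ ⟨hmem, hdisj⟩ hlen => ?_⟩
  have hdist_minmax : ∀ (φ : ℝ → ℝ) (x y : ℝ), |φ (max x y) - φ (min x y)| = dist (φ x) (φ y) := by
    intro φ x y
    rcases le_total x y with hxy | hxy <;> simp [hxy, Real.dist_eq, abs_sub_comm]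
  have key := H n (fun i => min (I i).1 (I i).2) (fun i => max (I i).1 (I i).2)
    (fun i => by
      obtain ⟨h₁, h₂⟩ := hmem i (Finset.mem_range.2 i.2)
      rw [uIcc_of_le hab] at h₁ h₂
      exact ⟨le_min h₁.1 h₂.1, min_le_max, max_le h₁.2 h₂.2⟩)
    (fun i j hij => (hdisj (Finset.mem_range.2 i.2) (Finset.mem_range.2 j.2)
      (Fin.val_injective.ne hij)).mono Ioo_subset_Ioc_self Ioo_subset_Ioc_self)
    (by simpa [Finset.sum_range, max_sub_min_eq_abs', Real.dist_eq] using hlen)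
  simpa [Finset.sum_range, hdist_minmax f] using key

theorem AbsolutelyContinuousOnInterval.le_of_ae_deriv_nonpos {f : ℝ → ℝ} {a b : ℝ}
    (hf : AbsolutelyContinuousOnInterval f a b) (hab : a ≤ b)
    (hf' : ∀ᵐ x, x ∈ Ioo a b → deriv f x ≤ 0) : f b ≤ f a := by
  have : ∫ x in a..b, deriv f x ≤ 0 := by
    rw [intervalIntegral.integral_of_le hab, ← setIntegral_congr_set Ioo_ae_eq_Ioc]
    exact setIntegral_nonpos_ae measurableSet_Ioo hf'
  linarith [hf.integral_deriv_eq_sub]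

/-- On a maximal interval `(c, t]` where `g > 0`, the function `e^{-K s} g(s)` is nonincreasing,
which is impossible since it starts at `e^{-K c} g(c) ≤ 0`. -/
theorem AbsolutelyContinuousOnInterval.nonpos_of_ae_hasDerivAt_le_mul {g : ℝ → ℝ} {a b K : ℝ}
    (hg : AbsolutelyContinuousOnInterval g a b) (ha : g a ≤ 0)
    (hg' : ∀ᵐ t, t ∈ Icc a b → 0 < g t → ∃ d ≤ K * g t, HasDerivAt g d t) :
    ∀ t ∈ Icc a b, g t ≤ 0 := by
  intro t ht
  by_contra! hpos
  have hsub : Icc a t ⊆ Icc a b := Icc_subset_Icc_right ht.2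
  have hcont : ContinuousOn g (Icc a t) :=
    hg.continuousOn.mono (uIcc_of_le (ht.1.trans ht.2) ▸ hsub)
  obtain ⟨c, ⟨hc, hgc⟩, hlast⟩ : ∃ c, IsGreatest (Icc a t ∩ g ⁻¹' Iic 0) c :=
    (isCompact_Icc.of_isClosed_subset (hcont.preimage_isClosed_of_isClosed isClosed_Icc
      isClosed_Iic) inter_subset_left).exists_isGreatest ⟨a, left_mem_Icc.2 ht.1, ha⟩
  have hct : c < t := hc.2.lt_of_ne (by rintro rfl; exact hgc.not_gt hpos)
  have hpos_after : ∀ s ∈ Ioo c t, 0 < g s := fun s hs => by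
    by_contra! hs'
    exact hs.1.not_ge (hlast ⟨⟨hc.1.trans hs.1.le, hs.2.le⟩, hs'⟩)
  set u : ℝ → ℝ := fun s => Real.exp (-K * s) * g s
  have hu : AbsolutelyContinuousOnInterval u c t := by
    have hexp : ContDiffOn ℝ 1 (fun s => Real.exp (-K * s)) (uIcc c t) := by fun_prop
    refine hexp.absolutelyContinuousOnInterval.mul (hg.mono ?_)
    rw [uIcc_of_le hct.le, uIcc_of_le (ht.1.trans ht.2)]
    exact (Icc_subset_Icc_left hc.1).trans hsub
  have hu' : ∀ᵐ s, s ∈ Ioo c t → deriv u s ≤ 0 := by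
    filter_upwards [hg'] with s hs hsct
    obtain ⟨d, hdK, hd⟩ := hs (hsub ⟨hc.1.trans hsct.1.le, hsct.2.le⟩) (hpos_after s hsct)
    have hus : HasDerivAt u (Real.exp (-K * s) * (d - K * g s)) s := by
      refine ((((hasDerivAt_id s).const_mul (-K)).exp).mul hd).congr_deriv ?_
      simp only [id_eq]
      ring
    rw [hus.deriv]
    exact mul_nonpos_of_nonneg_of_nonpos (Real.exp_pos _).le (by linarith)
  have hut : u t ≤ u c := hu.le_of_ae_deriv_nonpos hct.le hu'
  have : 0 < u t := mul_pos (Real.exp_pos _) hpos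
  have : u c ≤ 0 := mul_nonpos_of_nonneg_of_nonpos (Real.exp_pos _).le hgc
  linarith

theorem IsCompact.exists_lipschitzOnWith {α β : Type*} [PseudoMetricSpace α]
    [PseudoMetricSpace β] {f : α → β} {S : Set α} (hS : IsCompact S)
    (hf : ∀ x ∈ S, ∃ t ∈ 𝓝 x, ∃ K, LipschitzOnWith K f t) : ∃ K, LipschitzOnWith K f S :=
  LocallyLipschitzOn.exists_lipschitzOnWith_of_compact hS fun x hx =>
    let ⟨t, ht, K, hK⟩ := hf x hx
    ⟨K, t, mem_nhdsWithin_of_mem_nhds ht, hK⟩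

theorem inclusion_comparison_general (Γ : ℝ → Set ℝ) (h : ℝ → ℝ) (kbar T : ℝ) (k₁ k₂ : ℝ → ℝ)
    (hlip : ∀ x : ℝ, 0 < x → ∃ s ∈ 𝓝 x, ∃ K : NNReal, LipschitzOnWith K h s)
    (hdom : ∀ x y : ℝ, 0 < x → y ∈ Γ x → y ≤ h x)
    (h₁ : SolvesODEOn h kbar k₁ (Set.Icc 0 T))
    (h₂ : SolvesInclOn Γ kbar k₂ (Set.Icc 0 T)) :
    ∀ t ∈ Set.Icc (0:ℝ) T, k₂ t ≤ k₁ t := by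
  intro t ht
  obtain rfl | hT := (ht.1.trans ht.2).eq_or_lt
  · rw [le_antisymm ht.2 ht.1, h₁.init, h₂.init]
  have h0T : (0 : ℝ) ∈ Icc 0 T := left_mem_Icc.2 hT.le
  have hT0 : T ∈ Icc 0 T := right_mem_Icc.2 hT.le
  have hAC₁ := (h₁.locAC 0 T h0T hT0 hT).absolutelyContinuousOnInterval hT.le
  have hAC₂ := (h₂.locAC 0 T h0T hT0 hT).absolutelyContinuousOnInterval hT.le
  have hc₁ : ContinuousOn k₁ (Icc 0 T) := uIcc_of_le hT.le ▸ hAC₁.continuousOn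
  have hc₂ : ContinuousOn k₂ (Icc 0 T) := uIcc_of_le hT.le ▸ hAC₂.continuousOn
  obtain ⟨K, hK⟩ := ((isCompact_Icc.image_of_continuousOn hc₁).union
    (isCompact_Icc.image_of_continuousOn hc₂)).exists_lipschitzOnWith (f := h) <| by
      rintro _ (⟨s, hs, rfl⟩ | ⟨s, hs, rfl⟩)
      exacts [hlip _ (h₁.pos s hs), hlip _ (h₂.pos s hs)]
  refine sub_nonpos.1 <| (hAC₂.sub hAC₁).nonpos_of_ae_hasDerivAt_le_mul (K := K)
    (by simp [h₁.init, h₂.init]) ?_ t ht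
  filter_upwards [h₁.hasDeriv, h₂.hasDeriv] with s hd₁ hd₂ hs hgap
  obtain ⟨d, hdΓ, hd⟩ := hd₂ hs
  refine ⟨d - h (k₁ s), ?_, hd.sub (hd₁ hs)⟩
  have hLip := hK.dist_le_mul (k₂ s) (Or.inr ⟨s, hs, rfl⟩) (k₁ s) (Or.inl ⟨s, hs, rfl⟩)
  rw [Pi.sub_apply] at hgap ⊢
  rw [Real.dist_eq, Real.dist_eq, abs_of_pos hgap] at hLip
  linarith [hdom _ d (h₂.pos s hs) hdΓ, le_abs_self (h (k₂ s) - h (k₁ s))]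

/-- **Lemma 5.** Comparison between a solution of the ODE `k' = h(k)` and a solution of the
differential inclusion `k' ∈ Γ(k)` when `Γ(k)` lies below `h(k)`. -/
theorem inclusion_comparison (Γ : ℝ → Set ℝ) (h : ℝ → ℝ) (kbar T : ℝ) (k₁ k₂ : ℝ → ℝ)
    (hΓne : ∀ x : ℝ, 0 < x → (Γ x).Nonempty)
    (hlip : ∀ x : ℝ, 0 < x → ∃ s ∈ 𝓝 x, ∃ K : NNReal, LipschitzOnWith K h s)
    (hdom : ∀ x y : ℝ, 0 < x → y ∈ Γ x → y ≤ h x)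
    (hkbar : 0 < kbar) (hT : 0 < T)
    (h₁ : SolvesODEOn h kbar k₁ (Set.Icc 0 T))
    (h₂ : SolvesInclOn Γ kbar k₂ (Set.Icc 0 T)) :
    ∀ t ∈ Set.Icc (0:ℝ) T, k₂ t ≤ k₁ t :=
  inclusion_comparison_general Γ h kbar T k₁ k₂ hlip hdom h₁ h₂

end
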